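/- Let (G,T) be a graft, let F be a minimum join, let X ⊆ V(G) be an extreme set, and let Y, Z ⊆ V(G) be disjoint sets with Y ∪ Z = V(G)∖X, such that no edge of G joins Y and Z, and F contains no edge with both ends in Z and no edge of δ_G(Z). Let (Ĝ, T̂) be a graft with V(Ĝ) ⊇ V(G), E(Ĝ) ⊇ E(G), T̂ = T, such that every edge of E(Ĝ)∖E(G) joins a vertex of X to a vertex of V(Ĝ)∖V(G). Let Ẑ = Z ∪ (V(Ĝ)∖V(G)). If Q is a path of Ĝ between a vertex y ∈ Y and a vertex of X with V(Q) ∩ Ẑ ≠ ∅, then w_F(Q) > min_{x∈X} d_F(x,y), where the distance is computed in G. -/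

import Mathlib

open scoped Classical

variable {V : Type*}

/-- The `F`-weight of a walk: number of edges outside `F` minus number of edges in `F`. -/
noncomputable def walkWeight {G : SimpleGraph V} (F : Set (Sym2 V)) {x y : V}
    (p : G.Walk x y) : ℤ :=
  ((p.edges.filter fun e => e ∉ F).length : ℤ) -
    ((p.edges.filter fun e => e ∈ F).length : ℤ)

/-- The `F`-distance between `x` and `y`: the minimum `F`-weight of a path between them. -/
noncomputable def distF (G : SimpleGraph V) (F : Set (Sym2 V)) (x y : V) : ℤ :=
  sInf {w : ℤ | ∃ p : G.Walk x y, p.IsPath ∧ walkWeight F p = w}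

/-- `F` is a join of the graft `(G, T)`. -/
def IsJoin (G : SimpleGraph V) (T : Set V) (F : Set (Sym2 V)) : Prop :=
  F ⊆ G.edgeSet ∧ ∀ v : V, v ∈ T ↔ Odd {e ∈ F | v ∈ e}.ncard

/-- `F` is a minimum join of the graft `(G, T)`. -/
def IsMinJoin (G : SimpleGraph V) (T : Set V) (F : Set (Sym2 V)) : Prop :=
  IsJoin G T F ∧ ∀ F' : Set (Sym2 V), IsJoin G T F' → F.ncard ≤ F'.ncard

/-- `(G, T)` is a graft: every connected component contains an even number of vertices of `T`. -/
def IsGraft (G : SimpleGraph V) (T : Set V) : Prop :=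
  ∀ v : V, Even {u | u ∈ T ∧ G.Reachable v u}.ncard

/-- `X` is an extreme set: `d_F(x, y) ≥ 0` for all `x, y ∈ X`. -/
def IsExtremeSet (G : SimpleGraph V) (F : Set (Sym2 V)) (X : Set V) : Prop :=
  ∀ x ∈ X, ∀ y ∈ X, 0 ≤ distF G F x y

/-- `G` is bipartite with vertex set `Vset` and color classes `A`, `B`. -/
def IsBipartitionOn (G : SimpleGraph V) (Vset A B : Set V) : Prop :=
  A ∪ B = Vset ∧ Disjoint A B ∧
    ∀ v w : V, G.Adj v w → (v ∈ A ∧ w ∈ B) ∨ (v ∈ B ∧ w ∈ A)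

/-- `X` is a maximal bipartitic extreme set with respect to color classes `A`, `B`. -/
def MaxBipExtreme (G : SimpleGraph V) (F : Set (Sym2 V)) (A B X : Set V) : Prop :=
  IsExtremeSet G F X ∧ (X ⊆ A ∨ X ⊆ B) ∧
    ∀ X' : Set V, IsExtremeSet G F X' → (X' ⊆ A ∨ X' ⊆ B) → X ⊆ X' → X' = X

/-- `D_X`: the vertices of `Vset ∖ X` at negative `F`-distance from `X`. -/
def Dset (G : SimpleGraph V) (F : Set (Sym2 V)) (Vset X : Set V) : Set V :=
  {y | y ∈ Vset ∧ y ∉ X ∧ ∃ x ∈ X, distF G F x y < 0}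

/-- `C_X = Vset ∖ X ∖ D_X`. -/
def Cset (G : SimpleGraph V) (F : Set (Sym2 V)) (Vset X : Set V) : Set V :=
  (Vset \ X) \ Dset G F Vset X

/-- `min_{x ∈ X} d_F(x, y)`. -/
noncomputable def minDistX (G : SimpleGraph V) (F : Set (Sym2 V)) (X : Set V) (y : V) : ℤ :=
  sInf {d : ℤ | ∃ x ∈ X, distF G F x y = d}

/-- The graph `G − S` obtained by deleting the vertices of `S`. -/
def gDelete (G : SimpleGraph V) (S : Set V) : SimpleGraph V where
  Adj v w := G.Adj v w ∧ v ∉ S ∧ w ∉ S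
  symm := ⟨fun v w ⟨h, hv, hw⟩ => ⟨h.symm, hw, hv⟩⟩
  loopless := ⟨fun v h => G.loopless.irrefl v h.1⟩

/-- The subgraph of `G` induced by `S`. -/
def gRestrict (G : SimpleGraph V) (S : Set V) : SimpleGraph V where
  Adj v w := G.Adj v w ∧ v ∈ S ∧ w ∈ S
  symm := ⟨fun v w ⟨h, hv, hw⟩ => ⟨h.symm, hw, hv⟩⟩
  loopless := ⟨fun v h => G.loopless.irrefl v h.1⟩

/-- `C` is (the vertex set of) a connected component of `G − X`. -/
def IsCompOf (G : SimpleGraph V) (X C : Set V) : Prop :=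
  ∃ v, v ∉ X ∧ C = {u | (gDelete G X).Reachable v u}

/-- `δ_G(C)`: the edges of `G` with exactly one end in `C`. -/
def edgeBoundary (G : SimpleGraph V) (C : Set V) : Set (Sym2 V) :=
  {e | e ∈ G.edgeSet ∧ ∃ u v : V, e = s(u, v) ∧ u ∈ C ∧ v ∉ C}

/-- `X` is an `F`-combic set of the graft `(G, T)`. -/
def IsCombic (G : SimpleGraph V) (T : Set V) (F : Set (Sym2 V)) (X : Set V) : Prop :=
  (∀ u v : V, s(u, v) ∈ F → ¬(u ∈ X ∧ v ∈ X)) ∧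
  (∀ C : Set V, IsCompOf G X C → Odd (C ∩ T).ncard →
      (edgeBoundary G C ∩ F).ncard = 1) ∧
  (∀ C : Set V, IsCompOf G X C → Even (C ∩ T).ncard →
      edgeBoundary G C ∩ F = ∅)

/-- The rootlization of `G` by the mount `X`, root `r` and attachment `s`. -/
def rootlize (G : SimpleGraph V) (X : Set V) (r s : V) : SimpleGraph V :=
  SimpleGraph.fromRel fun v w => G.Adj v w ∨ (v = r ∧ w = s) ∨ (v = s ∧ w ∈ X)

/-- The initial component of `r`: the connected component of `r` in the subgraph
induced by the vertices at nonpositive `F`-distance from `r`. -/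
def initComp (G : SimpleGraph V) (F : Set (Sym2 V)) (r : V) : Set V :=
  {x | (gRestrict G {y | distF G F r y ≤ 0}).Reachable r x}

/-!
Write `Ẑ = Z ∪ Vgᶜ`. No edge of `F` meets `Ẑ`, every `Ĝ`-edge leaving `Ẑ` ends in `X`, and a
`Ĝ`-edge with both ends outside `Ẑ` is an edge of `G`. So a path from `Ẑ` to `X` alternates
between excursions into `Ẑ`, each entered and left through edges outside `F`, and `G`-paths
between vertices of `X`, of nonnegative weight because `X` is extreme; its weight is at least `1`.
The part of `Q` before its first vertex of `Ẑ` is a `G`-path from `y` to some `x ∈ X`, followed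
by an edge outside `F`, whence `w_F(Q) ≥ d_F(x, y) + 2`.
-/

namespace SimpleGraph.Walk

variable {G H : SimpleGraph V} {F : Set (Sym2 V)} {x y z : V}

lemma walkWeight_cons_of_notMem (h : G.Adj x y) (p : G.Walk y z) (he : s(x, y) ∉ F) :
    walkWeight F (cons h p) = 1 + walkWeight F p := by
  simp [walkWeight, he]
  ring

lemma walkWeight_append (p : G.Walk x y) (q : G.Walk y z) :
    walkWeight F (p.append q) = walkWeight F p + walkWeight F q := by
  simp only [walkWeight, edges_append, List.filter_append, List.length_append]
  push_cast
  ring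

lemma walkWeight_reverse (p : G.Walk x y) : walkWeight F p.reverse = walkWeight F p := by
  simp [walkWeight, List.filter_reverse]

lemma walkWeight_transfer (p : G.Walk x y) (hp : ∀ e ∈ p.edges, e ∈ H.edgeSet) :
    walkWeight F (p.transfer H hp) = walkWeight F p := by
  simp [walkWeight]

lemma exists_eq_append_cons_of_exists_mem (B : Set V) (Q : G.Walk x y) (hx : x ∉ B)
    (hQ : ∃ t ∈ Q.support, t ∈ B) :
    ∃ (u t : V) (h : G.Adj u t) (Q₁ : G.Walk x u) (Q₂ : G.Walk t y),
      Q = Q₁.append (cons h Q₂) ∧ (∀ s ∈ Q₁.support, s ∉ B) ∧ t ∈ B := by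
  induction Q with
  | nil => obtain ⟨t, ht, htB⟩ := hQ; simp_all
  | @cons a b c h Q ih =>
    by_cases hb : b ∈ B
    · exact ⟨a, b, h, nil, Q, rfl, by simpa using hx, hb⟩
    · obtain ⟨t, ht, htB⟩ := hQ
      rw [support_cons, List.mem_cons] at ht
      obtain rfl | ht := ht
      · exact absurd htB hx
      obtain ⟨u, t, h', Q₁, Q₂, rfl, hQ₁, htB⟩ := ih hb ⟨t, ht, htB⟩
      refine ⟨u, t, h', cons h Q₁, Q₂, rfl, ?_, htB⟩
      simpa [hx] using hQ₁

lemma edges_mem_edgeSet_of_support_notMem {B : Set V}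
    (hG : ∀ u w, H.Adj u w → u ∉ B → w ∉ B → G.Adj u w) (Q : H.Walk x y)
    (hQ : ∀ s ∈ Q.support, s ∉ B) : ∀ e ∈ Q.edges, e ∈ G.edgeSet := by
  intro e he
  induction e using Sym2.ind with
  | _ p q =>
    exact hG p q (Q.adj_of_mem_edges he) (hQ p (Q.fst_mem_support_of_mem_edges he))
      (hQ q (Q.snd_mem_support_of_mem_edges he))

end SimpleGraph.Walk

open SimpleGraph Walk

lemma distF_comm (G : SimpleGraph V) (F : Set (Sym2 V)) (x y : V) :
    distF G F x y = distF G F y x := by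
  suffices h : ∀ x y, {w : ℤ | ∃ p : G.Walk x y, p.IsPath ∧ walkWeight F p = w} ⊆
      {w : ℤ | ∃ p : G.Walk y x, p.IsPath ∧ walkWeight F p = w} from
    congrArg sInf ((h x y).antisymm (h y x))
  rintro x y _ ⟨p, hp, rfl⟩
  exact ⟨p.reverse, hp.reverse, walkWeight_reverse p⟩

section Distance

variable [Fintype V] {G H : SimpleGraph V} {F : Set (Sym2 V)} {x y : V}

lemma distF_le_walkWeight (p : G.Walk x y) (hp : p.IsPath) :
    distF G F x y ≤ walkWeight F p := by
  have hfin : {w : ℤ | ∃ p : G.Walk x y, p.IsPath ∧ walkWeight F p = w}.Finite :=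
    (Set.finite_range fun q : G.Path x y => walkWeight F q.1).subset
      fun _ ⟨p, hp, hw⟩ => ⟨⟨p, hp⟩, hw⟩
  exact csInf_le hfin.bddBelow ⟨p, hp, rfl⟩

lemma distF_le_walkWeight_of_edges_subset (p : H.Walk x y) (hp : p.IsPath)
    (hpG : ∀ e ∈ p.edges, e ∈ G.edgeSet) : distF G F x y ≤ walkWeight F p := by
  simpa [walkWeight_transfer] using distF_le_walkWeight (F := F) _ (hp.transfer hpG)

lemma minDistX_le_distF {X : Set V} (hx : x ∈ X) : minDistX G F X y ≤ distF G F x y :=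
  csInf_le ((X.toFinite.image fun x => distF G F x y).bddBelow) ⟨x, hx, rfl⟩

end Distance

section Entry

variable [Fintype V] {G H : SimpleGraph V} {F : Set (Sym2 V)} {X B : Set V} {v x : V}

lemma exists_distF_add_walkWeight_le_of_exists_mem (hFB : ∀ e ∈ F, ∀ b ∈ B, b ∉ e)
    (hnbr : ∀ b w, H.Adj b w → b ∈ B → w ∈ X ∪ B)
    (hG : ∀ u w, H.Adj u w → u ∉ B → w ∉ B → G.Adj u w)
    (Q : H.Walk v x) (hQ : Q.IsPath) (hv : v ∉ B) (hmeet : ∃ t ∈ Q.support, t ∈ B) :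
    ∃ u ∈ X, ∃ t ∈ B, ∃ Q₂ : H.Walk t x, Q₂.IsPath ∧ Q₂.length < Q.length ∧
      distF G F v u + 1 + walkWeight F Q₂ ≤ walkWeight F Q := by
  obtain ⟨u, t, h, Q₁, Q₂, rfl, hQ₁, ht⟩ := Q.exists_eq_append_cons_of_exists_mem B hv hmeet
  have hu : u ∈ X :=
    (hnbr t u h.symm ht).resolve_right (hQ₁ u Q₁.end_mem_support)
  have hd : distF G F v u ≤ walkWeight F Q₁ :=
    distF_le_walkWeight_of_edges_subset Q₁ hQ.of_append_left
      (edges_mem_edgeSet_of_support_notMem hG Q₁ hQ₁)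
  refine ⟨u, hu, t, ht, Q₂, hQ.of_append_right.of_cons, by simp; omega, ?_⟩
  have hut : s(u, t) ∉ F := fun hF => hFB _ hF t ht (Sym2.mem_mk_right u t)
  rw [walkWeight_append, walkWeight_cons_of_notMem _ _ hut]
  linarith

lemma one_le_walkWeight_of_mem (hext : IsExtremeSet G F X) (hXB : Disjoint X B)
    (hFB : ∀ e ∈ F, ∀ b ∈ B, b ∉ e) (hnbr : ∀ b w, H.Adj b w → b ∈ B → w ∈ X ∪ B)
    (hG : ∀ u w, H.Adj u w → u ∉ B → w ∉ B → G.Adj u w)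
    (Q : H.Walk v x) (hQ : Q.IsPath) (hv : v ∈ B) (hx : x ∈ X) : 1 ≤ walkWeight F Q := by
  induction hn : Q.length using Nat.strong_induction_on generalizing v with
  | _ n ih =>
    cases Q with
    | nil => exact absurd hv (hXB.notMem_of_mem_left hx)
    | @cons _ w _ h Q' =>
      subst hn
      have ih' : ∀ {t} (P : H.Walk t x), P.IsPath → t ∈ B → P.length ≤ Q'.length →
          1 ≤ walkWeight F P := fun P hP ht hlen =>
        ih P.length (by simp; omega) P hP ht rfl
      have hQ' : 0 ≤ walkWeight F Q' := by
        rcases hnbr v w h hv with hw | hw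
        · by_cases hmeet : ∃ t ∈ Q'.support, t ∈ B
          · obtain ⟨u, hu, t, ht, Q₂, hQ₂, hlen, hle⟩ :=
              exists_distF_add_walkWeight_le_of_exists_mem hFB hnbr hG Q' hQ.of_cons
                (hXB.notMem_of_mem_left hw) hmeet
            linarith [hext w hw u hu, ih' Q₂ hQ₂ ht hlen.le]
          · push Not at hmeet
            exact (hext w hw x hx).trans (distF_le_walkWeight_of_edges_subset Q' hQ.of_cons
              (edges_mem_edgeSet_of_support_notMem hG Q' hmeet))
        · linarith [ih' Q' hQ.of_cons hw le_rfl]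
      have hvw : s(v, w) ∉ F := fun hF => hFB _ hF v hv (Sym2.mem_mk_left v w)
      rw [walkWeight_cons_of_notMem _ _ hvw]
      linarith

end Entry

section Extension

variable {G Ghat : SimpleGraph V} {F : Set (Sym2 V)} {Vg Y Z X : Set V}

lemma notMem_of_mem_union_compl (hGV : ∀ v w : V, G.Adj v w → v ∈ Vg ∧ w ∈ Vg)
    (hFG : F ⊆ G.edgeSet) (hFZ : ∀ e ∈ F, ∀ v ∈ Z, v ∉ e) :
    ∀ e ∈ F, ∀ b ∈ Z ∪ Vgᶜ, b ∉ e := by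
  rintro e he b (hb | hb) hbe
  · exact hFZ e he b hb hbe
  · induction e using Sym2.ind with
    | _ u w =>
      have := hGV u w (hFG he)
      rcases Sym2.mem_iff.mp hbe with rfl | rfl <;> tauto

lemma mem_union_of_adj_of_mem_union_compl (hGV : ∀ v w : V, G.Adj v w → v ∈ Vg ∧ w ∈ Vg)
    (hYZ : Y ∪ Z = Vg \ X) (hnoedge : ∀ y ∈ Y, ∀ z ∈ Z, ¬ G.Adj y z)
    (hnew : ∀ v w : V, Ghat.Adj v w → ¬ G.Adj v w → (v ∈ X ∧ w ∉ Vg) ∨ (w ∈ X ∧ v ∉ Vg)) :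
    ∀ b w, Ghat.Adj b w → b ∈ Z ∪ Vgᶜ → w ∈ X ∪ (Z ∪ Vgᶜ) := by
  intro b w hbw hb
  by_cases hG : G.Adj b w
  · obtain ⟨hbV, hwV⟩ := hGV b w hG
    have hbZ : b ∈ Z := hb.resolve_right (not_not.mpr hbV)
    by_cases hwX : w ∈ X
    · exact Or.inl hwX
    · have hwYZ : w ∈ Y ∪ Z := hYZ ▸ ⟨hwV, hwX⟩
      exact Or.inr (Or.inl (hwYZ.resolve_left fun hwY => hnoedge w hwY b hbZ hG.symm))
  · rcases hnew b w hbw hG with ⟨-, hwV⟩ | ⟨hwX, -⟩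
    · exact Or.inr (Or.inr hwV)
    · exact Or.inl hwX

lemma adj_of_notMem_union_compl
    (hnew : ∀ v w : V, Ghat.Adj v w → ¬ G.Adj v w → (v ∈ X ∧ w ∉ Vg) ∨ (w ∈ X ∧ v ∉ Vg)) :
    ∀ u w, Ghat.Adj u w → u ∉ Z ∪ Vgᶜ → w ∉ Z ∪ Vgᶜ → G.Adj u w := by
  intro u w huw hu hw
  by_contra hG
  rcases hnew u w huw hG with ⟨-, hwV⟩ | ⟨-, huV⟩
  · exact hw (Or.inr hwV)
  · exact hu (Or.inr huV)

lemma disjoint_union_compl (hXV : X ⊆ Vg) (hYZ : Y ∪ Z = Vg \ X) :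
    Disjoint X (Z ∪ Vgᶜ) := by
  have hZ : Z ⊆ Vg \ X := hYZ ▸ Set.subset_union_right
  rw [Set.disjoint_union_right]
  exact ⟨Set.disjoint_left.mpr fun x hx hxZ => (hZ hxZ).2 hx,
    Set.disjoint_compl_right_iff_subset.mpr hXV⟩

lemma notMem_union_compl_of_mem (hYZdisj : Disjoint Y Z) (hYZ : Y ∪ Z = Vg \ X) {y : V}
    (hy : y ∈ Y) : y ∉ Z ∪ Vgᶜ := by
  have hY : Y ⊆ Vg \ X := hYZ ▸ Set.subset_union_left
  rintro (hyZ | hyV)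
  · exact hYZdisj.notMem_of_mem_left hy hyZ
  · exact hyV (hY hy).1

end Extension

theorem stmt_6_general [Fintype V] (G Ghat : SimpleGraph V) (Vg T Y Z X : Set V)
    (F : Set (Sym2 V))
    (hGV : ∀ v w : V, G.Adj v w → v ∈ Vg ∧ w ∈ Vg)
    (hF : IsMinJoin G T F)
    (hXV : X ⊆ Vg) (hext : IsExtremeSet G F X)
    (hYZdisj : Disjoint Y Z) (hYZ : Y ∪ Z = Vg \ X)
    (hnoedge : ∀ y ∈ Y, ∀ z ∈ Z, ¬ G.Adj y z)
    (hFZ : ∀ e ∈ F, ∀ v ∈ Z, v ∉ e)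
    (hnew : ∀ v w : V, Ghat.Adj v w → ¬ G.Adj v w →
      (v ∈ X ∧ w ∉ Vg) ∨ (w ∈ X ∧ v ∉ Vg)) :
    ∀ (y x : V) (Q : Ghat.Walk y x), Q.IsPath → y ∈ Y → x ∈ X →
      (∃ t ∈ Q.support, t ∈ Z ∪ Vgᶜ) → minDistX G F X y < walkWeight F Q := by
  intro y x Q hQ hy hx hmeet
  have hFB := notMem_of_mem_union_compl hGV hF.1.1 hFZ
  have hnbr := mem_union_of_adj_of_mem_union_compl hGV hYZ hnoedge hnew
  have hG := adj_of_notMem_union_compl (Z := Z) hnew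
  obtain ⟨u, hu, t, ht, Q₂, hQ₂, -, hle⟩ := exists_distF_add_walkWeight_le_of_exists_mem
    hFB hnbr hG Q hQ (notMem_union_compl_of_mem hYZdisj hYZ hy) hmeet
  have hQ₂ :=
    one_le_walkWeight_of_mem hext (disjoint_union_compl hXV hYZ) hFB hnbr hG Q₂ hQ₂ ht hx
  have hmin : minDistX G F X y ≤ distF G F y u := distF_comm G F u y ▸ minDistX_le_distF hu
  linarith

/-- in the setting of Statement 5, every path of `Ĝ` between a vertex
`y ∈ Y` and a vertex of `X` that meets `Ẑ` has `F`-weight greater than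
`min_{x ∈ X} d_F(x, y)` (distances computed in `G`). -/
theorem stmt_6 [Fintype V] (G Ghat : SimpleGraph V) (Vg T Y Z X : Set V)
    (F : Set (Sym2 V))
    (hGV : ∀ v w : V, G.Adj v w → v ∈ Vg ∧ w ∈ Vg)
    (hT : T ⊆ Vg) (hGT : IsGraft G T) (hF : IsMinJoin G T F)
    (hXV : X ⊆ Vg) (hext : IsExtremeSet G F X)
    (hYZdisj : Disjoint Y Z) (hYZ : Y ∪ Z = Vg \ X)
    (hnoedge : ∀ y ∈ Y, ∀ z ∈ Z, ¬ G.Adj y z)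
    (hFZ : ∀ e ∈ F, ∀ v ∈ Z, v ∉ e)
    (hsub : G ≤ Ghat)
    (hnew : ∀ v w : V, Ghat.Adj v w → ¬ G.Adj v w →
      (v ∈ X ∧ w ∉ Vg) ∨ (w ∈ X ∧ v ∉ Vg))
    (hGhat : IsGraft Ghat T) :
    ∀ (y x : V) (Q : Ghat.Walk y x), Q.IsPath → y ∈ Y → x ∈ X →
      (∃ t ∈ Q.support, t ∈ Z ∪ Vgᶜ) → minDistX G F X y < walkWeight F Q :=
  stmt_6_general G Ghat Vg T Y Z X F hGV hF hXV hext hYZdisj hYZ hnoedge hFZ hnew
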